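/- arXiv:1911.06870 — 2 statements merged into one kernel-verified Lean document; each statement's English description precedes it below -/
import Mathlib

section
/- If φ(x) = −log(1 − F(x)) is convex, then the sequence (R_n)_{n≥2} with R_n = n ∫ F^{n−1}(1−F) dx is completely monotone: for all k ≥ 0 and n ≥ 2, (−1)^k (Δ^k R)_n ≥ 0, where Δ is the forward difference operator. -/
open MeasureTheory

/-- The cumulative hazard `φ(x) = −log(1 − F(x))`, valued in `[0, ∞]` (it is `⊤`
where `F(x) = 1`). -/
noncomputable def cumHazard (F : ℝ → ℝ) (x : ℝ) : EReal :=
  if F x < 1 then ((-Real.log (1 - F x) : ℝ) : EReal) else ⊤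

/-- Convexity for an extended-real-valued function on `ℝ`. -/
def ERealConvexOnUniv (φ : ℝ → EReal) : Prop :=
  ∀ a b θ : ℝ, 0 ≤ θ → θ ≤ 1 →
    φ (θ * a + (1 - θ) * b) ≤ (θ : EReal) * φ a + ((1 - θ) : EReal) * φ b

namespace RseqAux

open Set Filter Topology
open scoped ENNReal NNReal

/-- The polynomial `P_{n,k}(t) = t^{n-1} (1-t)^k (n(1-t) - kt)`. -/
noncomputable def Pp (n k : ℕ) (t : ℝ) : ℝ :=
  t ^ (n - 1) * (1 - t) ^ k * (n * (1 - t) - k * t)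

lemma Pp_sub {n : ℕ} (hn : 1 ≤ n) (k : ℕ) (t : ℝ) :
    Pp n k t - Pp (n + 1) k t = Pp n (k + 1) t := by
  obtain ⟨m, rfl⟩ : ∃ m, n = m + 1 := ⟨n - 1, by omega⟩
  show t ^ (m + 1 - 1) * (1 - t) ^ k * _ - t ^ (m + 1 + 1 - 1) * (1 - t) ^ k * _
      = t ^ (m + 1 - 1) * (1 - t) ^ (k + 1) * _
  simp only [Nat.add_sub_cancel]
  push_cast
  ring

lemma Pp_abs_le {n k : ℕ} (hn : 2 ≤ n) {t : ℝ} (h0 : 0 ≤ t) (h1 : t ≤ 1) :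
    |Pp n k t| ≤ ((n : ℝ) + k) * (t * (1 - t)) := by
  have hn0 : (0 : ℝ) ≤ n := Nat.cast_nonneg n
  have hk0 : (0 : ℝ) ≤ k := Nat.cast_nonneg k
  have h1t : (0 : ℝ) ≤ 1 - t := by linarith
  have hfac : |(n : ℝ) * (1 - t) - k * t| ≤ (n : ℝ) + k := by
    rw [abs_le]
    constructor <;> nlinarith
  have hpt : t ^ (n - 1) ≤ t := by
    calc t ^ (n - 1) ≤ t ^ 1 := pow_le_pow_of_le_one h0 h1 (by omega)
    _ = t := pow_one t
  have hbk : (1 - t) ^ k * |(n : ℝ) * (1 - t) - k * t| ≤ ((n : ℝ) + k) * (1 - t) := by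
    rcases k with _ | k
    · simp only [pow_zero, one_mul, Nat.cast_zero, mul_zero, sub_zero]
      rw [abs_of_nonneg (by nlinarith)]
      nlinarith
    · have hk1 : (1 - t) ^ (k + 1) ≤ 1 - t := by
        calc (1 - t) ^ (k + 1) ≤ (1 - t) ^ 1 := pow_le_pow_of_le_one h1t (by linarith) (by omega)
        _ = 1 - t := pow_one _
      calc (1 - t) ^ (k + 1) * |(n : ℝ) * (1 - t) - (k + 1 : ℕ) * t|
          ≤ (1 - t) * ((n : ℝ) + (k + 1 : ℕ)) :=
            mul_le_mul hk1 hfac (abs_nonneg _) h1t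
        _ = ((n : ℝ) + (k + 1 : ℕ)) * (1 - t) := by ring
  have hPabs : |Pp n k t| = t ^ (n - 1) * ((1 - t) ^ k * |(n : ℝ) * (1 - t) - k * t|) := by
    unfold Pp
    rw [abs_mul, abs_mul, abs_of_nonneg (pow_nonneg h0 _), abs_of_nonneg (pow_nonneg h1t _),
      mul_assoc]
  rw [hPabs]
  calc t ^ (n - 1) * ((1 - t) ^ k * |(n : ℝ) * (1 - t) - k * t|)
      ≤ t * (((n : ℝ) + k) * (1 - t)) := by
        apply mul_le_mul hpt hbk (by positivity) h0
    _ = ((n : ℝ) + k) * (t * (1 - t)) := by ring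

lemma Pp_nonneg {n k : ℕ} {t : ℝ} (h0 : 0 ≤ t) (h1 : t ≤ 1)
    (h : 0 ≤ (n : ℝ) * (1 - t) - k * t) : 0 ≤ Pp n k t :=
  mul_nonneg (mul_nonneg (pow_nonneg h0 _) (pow_nonneg (by linarith) _)) h

lemma Pp_nonpos {n k : ℕ} {t : ℝ} (h0 : 0 ≤ t) (h1 : t ≤ 1)
    (h : (n : ℝ) * (1 - t) - k * t ≤ 0) : Pp n k t ≤ 0 := by
  have hab : 0 ≤ t ^ (n - 1) * (1 - t) ^ k :=
    mul_nonneg (pow_nonneg h0 _) (pow_nonneg (by linarith) _)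
  unfold Pp
  exact mul_nonpos_of_nonneg_of_nonpos hab h

lemma Pp_le {n k : ℕ} (hn : 2 ≤ n) {t : ℝ} (h0 : 0 ≤ t) (h1 : t ≤ 1) :
    Pp n k t ≤ n * t := by
  have hn0 : (0 : ℝ) ≤ n := Nat.cast_nonneg n
  have hk0 : (0 : ℝ) ≤ k := Nat.cast_nonneg k
  have h1t : (0 : ℝ) ≤ 1 - t := by linarith
  rcases le_or_gt ((n : ℝ) * (1 - t) - k * t) 0 with hf | hf
  · have := Pp_nonpos h0 h1 hf
    nlinarith
  · have hpt : t ^ (n - 1) ≤ t := by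
      calc t ^ (n - 1) ≤ t ^ 1 := pow_le_pow_of_le_one h0 h1 (by omega)
      _ = t := pow_one t
    have h2 : (1 - t) ^ k ≤ 1 := pow_le_one₀ h1t (by linarith)
    have h3 : (n : ℝ) * (1 - t) - k * t ≤ n := by nlinarith
    calc Pp n k t ≤ t * 1 * ((n : ℝ) * (1 - t) - k * t) := by
          unfold Pp
          apply mul_le_mul (mul_le_mul hpt h2 (pow_nonneg h1t _) h0) le_rfl hf.le
          nlinarith
      _ ≤ t * 1 * n := by nlinarith
      _ = n * t := by ring

lemma neg_Pp_le {n k : ℕ} (hn : 2 ≤ n) {t : ℝ} (h0 : 0 ≤ t) (h1 : t ≤ 1) :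
    -Pp n k t ≤ ((n : ℝ) + k) * (1 - t) := by
  have h := Pp_abs_le hn h0 h1 (k := k)
  have h2 : -Pp n k t ≤ |Pp n k t| := neg_le_abs _
  have hn0 : (0 : ℝ) ≤ n := Nat.cast_nonneg n
  have hk0 : (0 : ℝ) ≤ k := Nat.cast_nonneg k
  nlinarith [mul_nonneg (mul_nonneg (by linarith : (0:ℝ) ≤ (n:ℝ) + k)
    (by linarith : (0:ℝ) ≤ 1 - t)) (by linarith : (0:ℝ) ≤ 1 - t)]

lemma rpow_pow_comm {x : ℝ} (hx : 0 ≤ x) (p : ℝ) (m : ℕ) :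
    (x ^ m) ^ p = (x ^ p) ^ m := by
  rw [← Real.rpow_natCast x m, ← Real.rpow_mul hx, mul_comm, Real.rpow_mul hx,
    Real.rpow_natCast]

lemma logconc {m k : ℕ} {A B t₁ t t₂ y : ℝ} (h₁0 : 0 < t₁) (h₂1 : t₂ < 1)
    (hL₁ : 0 < A + B * t₁) (hL₂ : 0 < A + B * t₂)
    (hlt : t₁ < t) (hlt' : t < t₂) (hy : 0 < y)
    (hy1 : y < t₁ ^ m * (1 - t₁) ^ k * (A + B * t₁))
    (hy2 : y < t₂ ^ m * (1 - t₂) ^ k * (A + B * t₂)) :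
    y < t ^ m * (1 - t) ^ k * (A + B * t) := by
  set θ : ℝ := (t₂ - t) / (t₂ - t₁) with hθdef
  have h12 : t₁ < t₂ := hlt.trans hlt'
  have hd : 0 < t₂ - t₁ := by linarith
  have hθ0 : 0 < θ := div_pos (by linarith) hd
  have hθ1 : θ < 1 := by
    rw [div_lt_one hd]; linarith
  have hθ1' : 0 < 1 - θ := by linarith
  have ht2 : 0 < t₂ := h₁0.trans h12
  have h₁1 : t₁ < 1 := by linarith
  have hA1 : (0:ℝ) ≤ 1 - t₁ := by linarith
  have hA2 : (0:ℝ) ≤ 1 - t₂ := by linarith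
  have hAt : (0:ℝ) ≤ 1 - t := by linarith
  have hcomb : θ * t₁ + (1 - θ) * t₂ = t := by
    field_simp [hθdef]
    have hθm : θ * (t₂ - t₁) = t₂ - t := by rw [hθdef]; exact div_mul_cancel₀ _ hd.ne'
    linear_combination -hθm
  have hG1 : t₁ ^ θ * t₂ ^ (1 - θ) ≤ t := by
    calc t₁ ^ θ * t₂ ^ (1 - θ) ≤ θ * t₁ + (1 - θ) * t₂ :=
          Real.geom_mean_le_arith_mean2_weighted hθ0.le hθ1'.le h₁0.le ht2.le (by ring)
      _ = t := hcomb
  have hG2 : (1 - t₁) ^ θ * (1 - t₂) ^ (1 - θ) ≤ 1 - t := by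
    calc (1 - t₁) ^ θ * (1 - t₂) ^ (1 - θ) ≤ θ * (1 - t₁) + (1 - θ) * (1 - t₂) :=
          Real.geom_mean_le_arith_mean2_weighted hθ0.le hθ1'.le (by linarith) (by linarith)
            (by ring)
      _ = 1 - t := by rw [← hcomb]; ring
  have hG3 : (A + B * t₁) ^ θ * (A + B * t₂) ^ (1 - θ) ≤ A + B * t := by
    calc (A + B * t₁) ^ θ * (A + B * t₂) ^ (1 - θ)
        ≤ θ * (A + B * t₁) + (1 - θ) * (A + B * t₂) :=
          Real.geom_mean_le_arith_mean2_weighted hθ0.le hθ1'.le hL₁.le hL₂.le (by ring)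
      _ = A + B * t := by rw [← hcomb]; ring
  have hsplit1 : (t₁ ^ m * (1 - t₁) ^ k * (A + B * t₁)) ^ θ
      = (t₁ ^ θ) ^ m * ((1 - t₁) ^ θ) ^ k * (A + B * t₁) ^ θ := by
    rw [Real.mul_rpow (mul_nonneg (pow_nonneg h₁0.le m) (pow_nonneg hA1 k)) hL₁.le,
      Real.mul_rpow (pow_nonneg h₁0.le m) (pow_nonneg hA1 k),
      rpow_pow_comm h₁0.le, rpow_pow_comm hA1]
  have hsplit2 : (t₂ ^ m * (1 - t₂) ^ k * (A + B * t₂)) ^ (1 - θ)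
      = (t₂ ^ (1 - θ)) ^ m * ((1 - t₂) ^ (1 - θ)) ^ k * (A + B * t₂) ^ (1 - θ) := by
    rw [Real.mul_rpow (mul_nonneg (pow_nonneg ht2.le m) (pow_nonneg hA2 k)) hL₂.le,
      Real.mul_rpow (pow_nonneg ht2.le m) (pow_nonneg hA2 k),
      rpow_pow_comm ht2.le, rpow_pow_comm hA2]
  have hy' : y = y ^ θ * y ^ (1 - θ) := by
    rw [← Real.rpow_add hy]
    norm_num
  have hstep : y < (t₁ ^ m * (1 - t₁) ^ k * (A + B * t₁)) ^ θ
      * (t₂ ^ m * (1 - t₂) ^ k * (A + B * t₂)) ^ (1 - θ) := by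
    rw [hy']
    exact mul_lt_mul (Real.rpow_lt_rpow hy.le hy1 hθ0)
      (Real.rpow_le_rpow hy.le hy2.le hθ1'.le)
      (Real.rpow_pos_of_pos hy _)
      (Real.rpow_nonneg (hy.trans hy1).le _)
  refine hstep.trans_le ?_
  rw [hsplit1, hsplit2]
  have hre : (t₁ ^ θ) ^ m * ((1 - t₁) ^ θ) ^ k * (A + B * t₁) ^ θ
      * ((t₂ ^ (1 - θ)) ^ m * ((1 - t₂) ^ (1 - θ)) ^ k * (A + B * t₂) ^ (1 - θ))
      = (t₁ ^ θ * t₂ ^ (1 - θ)) ^ m * ((1 - t₁) ^ θ * (1 - t₂) ^ (1 - θ)) ^ k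
        * ((A + B * t₁) ^ θ * (A + B * t₂) ^ (1 - θ)) := by
    rw [mul_pow, mul_pow]
    ring
  rw [hre]
  have hb1 : (0:ℝ) ≤ t₁ ^ θ * t₂ ^ (1 - θ) :=
    mul_nonneg (Real.rpow_nonneg h₁0.le _) (Real.rpow_nonneg ht2.le _)
  have hb2 : (0:ℝ) ≤ (1 - t₁) ^ θ * (1 - t₂) ^ (1 - θ) :=
    mul_nonneg (Real.rpow_nonneg hA1 _) (Real.rpow_nonneg hA2 _)
  have hb3 : (0:ℝ) ≤ (A + B * t₁) ^ θ * (A + B * t₂) ^ (1 - θ) :=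
    mul_nonneg (Real.rpow_nonneg hL₁.le _) (Real.rpow_nonneg hL₂.le _)
  have hp1 : (t₁ ^ θ * t₂ ^ (1 - θ)) ^ m ≤ t ^ m :=
    pow_le_pow_left₀ hb1 hG1 m
  have hp2 : ((1 - t₁) ^ θ * (1 - t₂) ^ (1 - θ)) ^ k ≤ (1 - t) ^ k :=
    pow_le_pow_left₀ hb2 hG2 k
  apply mul_le_mul (mul_le_mul hp1 hp2 (pow_nonneg hb2 k) (pow_nonneg (h₁0.trans hlt).le m))
    hG3 hb3
  exact mul_nonneg (pow_nonneg (h₁0.trans hlt).le m) (pow_nonneg hAt k)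

noncomputable def ell (t : ℝ) : ℝ := -Real.log (1 - t)

lemma ell_mono {a b : ℝ} (hab : a ≤ b) (hb : b < 1) : ell a ≤ ell b := by
  unfold ell
  have h1 : (0:ℝ) < 1 - b := by linarith
  have := (Real.log_le_log_iff h1 (by linarith)).2 (by linarith : 1 - b ≤ 1 - a)
  linarith

lemma ell_lt {a b : ℝ} (hab : a < b) (hb : b < 1) : ell a < ell b := by
  unfold ell
  have := Real.log_lt_log (by linarith : (0:ℝ) < 1 - b) (by linarith : 1 - b < 1 - a)
  linarith

lemma ell_exp (s : ℝ) : ell (1 - Real.exp (-s)) = s := by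
  unfold ell; rw [sub_sub_cancel, Real.log_exp]; ring

lemma exp_ell {t : ℝ} (h : t < 1) : Real.exp (-ell t) = 1 - t := by
  unfold ell; rw [neg_neg, Real.exp_log (by linarith)]

lemma ell_zero : ell 0 = 0 := by simp [ell]

lemma Pp_eq_pos (n k : ℕ) (t : ℝ) :
    t ^ (n - 1) * (1 - t) ^ k * ((n : ℝ) + (-((n : ℝ) + k)) * t) = Pp n k t := by
  unfold Pp; ring

lemma Pp_eq_neg (n k : ℕ) (t : ℝ) :
    t ^ (n - 1) * (1 - t) ^ k * (-(n : ℝ) + ((n : ℝ) + k) * t) = -Pp n k t := by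
  unfold Pp; ring

lemma Pp_zero {n k : ℕ} (hn : 2 ≤ n) : Pp n k 0 = 0 := by
  unfold Pp; rw [zero_pow (by omega : n - 1 ≠ 0)]; ring

lemma Pp_one {n k : ℕ} (hk : 1 ≤ k) : Pp n k 1 = 0 := by
  unfold Pp; rw [sub_self, zero_pow (by omega : k ≠ 0)]; ring

lemma U_conv {n k : ℕ} {y t₁ t t₂ : ℝ} (hy : 0 < y)
    (h₁ : 0 < t₁ ∧ t₁ < 1 ∧ y < Pp n k t₁) (h₂ : 0 < t₂ ∧ t₂ < 1 ∧ y < Pp n k t₂)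
    (hlt : t₁ < t) (hlt' : t < t₂) : y < Pp n k t := by
  have hL : ∀ s : ℝ, 0 < s → s < 1 → y < Pp n k s → 0 < (n : ℝ) + (-((n : ℝ) + k)) * s := by
    intro s hs0 hs1 hsy
    by_contra hcon; push_neg at hcon
    have e : (n : ℝ) * (1 - s) - k * s = (n : ℝ) + (-((n : ℝ) + k)) * s := by ring
    have := Pp_nonpos hs0.le hs1.le (by linarith [e ▸ hcon] : (n : ℝ) * (1 - s) - k * s ≤ 0)
    linarith
  have := logconc (m := n - 1) (k := k) h₁.1 h₂.2.1
    (hL t₁ h₁.1 h₁.2.1 h₁.2.2) (hL t₂ h₂.1 h₂.2.1 h₂.2.2) hlt hlt' hy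
    (by rw [Pp_eq_pos]; exact h₁.2.2) (by rw [Pp_eq_pos]; exact h₂.2.2)
  rwa [Pp_eq_pos] at this

lemma V_conv {n k : ℕ} {y t₁ t t₂ : ℝ} (hy : 0 < y)
    (h₁ : 0 < t₁ ∧ t₁ < 1 ∧ y < -Pp n k t₁) (h₂ : 0 < t₂ ∧ t₂ < 1 ∧ y < -Pp n k t₂)
    (hlt : t₁ < t) (hlt' : t < t₂) : y < -Pp n k t := by
  have hL : ∀ s : ℝ, 0 < s → s < 1 → y < -Pp n k s → 0 < -(n : ℝ) + ((n : ℝ) + k) * s := by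
    intro s hs0 hs1 hsy
    by_contra hcon; push_neg at hcon
    have := Pp_nonneg hs0.le hs1.le (by linarith : 0 ≤ (n : ℝ) * (1 - s) - k * s)
    linarith
  have := logconc (m := n - 1) (k := k) h₁.1 h₂.2.1
    (hL t₁ h₁.1 h₁.2.1 h₁.2.2) (hL t₂ h₂.1 h₂.2.1 h₂.2.2) hlt hlt' hy
    (by rw [Pp_eq_neg]; exact h₁.2.2) (by rw [Pp_eq_neg]; exact h₂.2.2)
  rwa [Pp_eq_neg] at this

lemma phir_convexOn {F : ℝ → ℝ} (hm : Monotone F)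
    (hconv : ERealConvexOnUniv (cumHazard F)) :
    ConvexOn ℝ {x | F x < 1} (fun x => -Real.log (1 - F x)) := by
  constructor
  · rw [convex_iff_ordConnected]
    exact ⟨fun x hx y hy z hz => lt_of_le_of_lt (hm hz.2) hy⟩
  · intro a ha b hb wa wb hwa hwb hw
    have hwb' : wb = 1 - wa := by linarith
    subst hwb'
    have hmax : F (max a b) < 1 := by
      rcases max_cases a b with ⟨h, _⟩ | ⟨h, _⟩ <;> rw [h]
      exacts [ha, hb]
    have hmid : F (wa * a + (1 - wa) * b) < 1 := by
      refine lt_of_le_of_lt (hm ?_) hmax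
      calc wa * a + (1 - wa) * b ≤ wa * max a b + (1 - wa) * max a b := by
            gcongr
            exacts [le_max_left a b, le_max_right a b]
        _ = max a b := by ring_nf
    have ha' : F a < 1 := ha
    have hb' : F b < 1 := hb
    have h := hconv a b wa hwa (by linarith)
    simp only [cumHazard] at h
    rw [if_pos ha', if_pos hb', if_pos hmid] at h
    rw [← EReal.coe_one, ← EReal.coe_sub, ← EReal.coe_mul, ← EReal.coe_mul, ← EReal.coe_add,
      EReal.coe_le_coe_iff] at h
    simpa [smul_eq_mul] using h

lemma cdf_mul_integrable (μ : Measure ℝ) [IsProbabilityMeasure μ]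
    (hint : Integrable (fun x => x) μ) {F : ℝ → ℝ}
    (hF : ∀ x, F x = (μ (Set.Iic x)).toReal) :
    Integrable (fun x => F x * (1 - F x)) := by
  have hm : Monotone F := by
    intro a b hab
    rw [hF a, hF b]
    exact ENNReal.toReal_mono (measure_ne_top μ _) (measure_mono (Iic_subset_Iic.2 hab))
  have h0 : ∀ x, 0 ≤ F x := fun x => by rw [hF x]; exact ENNReal.toReal_nonneg
  have h1 : ∀ x, F x ≤ 1 := fun x => by
    rw [hF x]
    have h2 : μ (Set.Iic x) ≤ 1 := prob_le_one
    calc (μ (Set.Iic x)).toReal ≤ (1 : ℝ≥0∞).toReal :=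
          ENNReal.toReal_mono ENNReal.one_ne_top h2
      _ = 1 := ENNReal.toReal_one
  have hFm : Measurable F := hm.measurable
  have h1F : ∀ x, 1 - F x = (μ (Set.Ioi x)).toReal := by
    intro x
    have hu : μ (Set.Iic x) + μ (Set.Ioi x) = 1 := by
      rw [← measure_union (Iic_disjoint_Ioi le_rfl) measurableSet_Ioi, Set.Iic_union_Ioi,
        measure_univ]
    have h2 : (μ (Set.Iic x)).toReal + (μ (Set.Ioi x)).toReal = 1 := by
      rw [← ENNReal.toReal_add (measure_ne_top μ _) (measure_ne_top μ _), hu, ENNReal.toReal_one]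
    rw [hF x]; linarith
  have hIy : ∫⁻ y, (‖y‖₊ : ℝ≥0∞) ∂μ < ⊤ := hint.2
  -- left tail
  have hswapL : ∫⁻ x in Iic (0:ℝ), μ (Iic x) ≤ ∫⁻ y, (‖y‖₊ : ℝ≥0∞) ∂μ := by
    have hmes : Measurable (Function.uncurry fun x y : ℝ => if y ≤ x then (1:ℝ≥0∞) else 0) := by
      exact Measurable.ite (measurableSet_le measurable_snd measurable_fst) measurable_const
        measurable_const
    calc ∫⁻ x in Iic (0:ℝ), μ (Iic x)
        = ∫⁻ x in Iic (0:ℝ), ∫⁻ y, (if y ≤ x then (1:ℝ≥0∞) else 0) ∂μ := by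
          refine lintegral_congr fun x => ?_
          rw [← lintegral_indicator_one measurableSet_Iic]
          exact lintegral_congr fun y => by simp [Set.indicator_apply, Set.mem_Iic]
      _ = ∫⁻ y, (∫⁻ x in Iic (0:ℝ), (if y ≤ x then (1:ℝ≥0∞) else 0)) ∂μ :=
          lintegral_lintegral_swap hmes.aemeasurable
      _ ≤ ∫⁻ y, (‖y‖₊ : ℝ≥0∞) ∂μ := by
          refine lintegral_mono fun y => ?_
          have e1 : ∫⁻ x in Iic (0:ℝ), (if y ≤ x then (1:ℝ≥0∞) else 0)
              = volume (Ici y ∩ Iic 0) := by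
            rw [← Measure.restrict_apply measurableSet_Ici,
              ← lintegral_indicator_one measurableSet_Ici]
            exact lintegral_congr fun x => by simp [Set.indicator_apply, Set.mem_Ici]
          rw [e1, Set.Ici_inter_Iic, Real.volume_Icc]
          calc ENNReal.ofReal (0 - y) ≤ (‖(0:ℝ) - y‖₊ : ℝ≥0∞) := Real.ofReal_le_enorm _
            _ = (‖y‖₊ : ℝ≥0∞) := by rw [zero_sub, nnnorm_neg]
  -- right tail
  have hswapR : ∫⁻ x in Ioi (0:ℝ), μ (Ioi x) ≤ ∫⁻ y, (‖y‖₊ : ℝ≥0∞) ∂μ := by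
    have hmes : Measurable (Function.uncurry fun x y : ℝ => if x < y then (1:ℝ≥0∞) else 0) := by
      exact Measurable.ite (measurableSet_lt measurable_fst measurable_snd) measurable_const
        measurable_const
    calc ∫⁻ x in Ioi (0:ℝ), μ (Ioi x)
        = ∫⁻ x in Ioi (0:ℝ), ∫⁻ y, (if x < y then (1:ℝ≥0∞) else 0) ∂μ := by
          refine lintegral_congr fun x => ?_
          rw [← lintegral_indicator_one measurableSet_Ioi]
          exact lintegral_congr fun y => by simp [Set.indicator_apply, Set.mem_Ioi]
      _ = ∫⁻ y, (∫⁻ x in Ioi (0:ℝ), (if x < y then (1:ℝ≥0∞) else 0)) ∂μ :=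
          lintegral_lintegral_swap hmes.aemeasurable
      _ ≤ ∫⁻ y, (‖y‖₊ : ℝ≥0∞) ∂μ := by
          refine lintegral_mono fun y => ?_
          have e1 : ∫⁻ x in Ioi (0:ℝ), (if x < y then (1:ℝ≥0∞) else 0)
              = volume (Iio y ∩ Ioi 0) := by
            rw [← Measure.restrict_apply measurableSet_Iio,
              ← lintegral_indicator_one measurableSet_Iio]
            exact lintegral_congr fun x => by simp [Set.indicator_apply, Set.mem_Iio]
          rw [e1, Set.Iio_inter_Ioi, Real.volume_Ioo]
          calc ENNReal.ofReal (y - 0) ≤ (‖y - 0‖₊ : ℝ≥0∞) := Real.ofReal_le_enorm _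
            _ = (‖y‖₊ : ℝ≥0∞) := by rw [sub_zero]
  have hL : IntegrableOn F (Iic 0) := by
    refine ⟨hFm.aestronglyMeasurable.restrict, ?_⟩
    have e1 : ∫⁻ x in Iic (0:ℝ), (‖F x‖₊ : ℝ≥0∞) = ∫⁻ x in Iic (0:ℝ), μ (Iic x) := by
      refine lintegral_congr fun x => ?_
      rw [← enorm_eq_nnnorm, Real.enorm_eq_ofReal (h0 x), hF x, ENNReal.ofReal_toReal (measure_ne_top μ _)]
    exact lt_of_le_of_lt (le_of_eq e1) (lt_of_le_of_lt hswapL hIy)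
  have hR : IntegrableOn (fun x => 1 - F x) (Ioi 0) := by
    refine ⟨(measurable_const.sub hFm).aestronglyMeasurable.restrict, ?_⟩
    have e1 : ∫⁻ x in Ioi (0:ℝ), (‖1 - F x‖₊ : ℝ≥0∞) = ∫⁻ x in Ioi (0:ℝ), μ (Ioi x) := by
      refine lintegral_congr fun x => ?_
      rw [← enorm_eq_nnnorm, Real.enorm_eq_ofReal (by linarith [h1 x]), h1F x,
        ENNReal.ofReal_toReal (measure_ne_top μ _)]
    exact lt_of_le_of_lt (le_of_eq e1) (lt_of_le_of_lt hswapR hIy)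
  set g₀ : ℝ → ℝ := fun x => if x ≤ 0 then F x else 1 - F x with hg₀def
  have hg₀ : Integrable g₀ := by
    rw [← integrableOn_univ, ← Set.Iic_union_Ioi (a := (0:ℝ))]
    refine IntegrableOn.union ?_ ?_
    · exact (integrableOn_congr_fun (fun x hx => by simp [hg₀def, (Set.mem_Iic.1 hx)])
        measurableSet_Iic).2 hL
    · exact (integrableOn_congr_fun
        (fun x hx => by simp [hg₀def, not_le.2 (Set.mem_Ioi.1 hx)]) measurableSet_Ioi).2 hR
  refine hg₀.mono (hFm.mul (measurable_const.sub hFm)).aestronglyMeasurable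
    (Filter.Eventually.of_forall fun x => ?_)
  have h0x := h0 x
  have h1x := h1 x
  rw [Real.norm_eq_abs, Real.norm_eq_abs, abs_of_nonneg (by nlinarith)]
  show F x * (1 - F x) ≤ |if x ≤ 0 then F x else 1 - F x|
  split_ifs with hx
  · rw [abs_of_nonneg h0x]; nlinarith
  · rw [abs_of_nonneg (by linarith)]; nlinarith

lemma PpF_integrable {F : ℝ → ℝ} (hm : Monotone F) (h0 : ∀ x, 0 ≤ F x) (h1 : ∀ x, F x ≤ 1)
    (hFF : Integrable (fun x => F x * (1 - F x))) {n k : ℕ} (hn : 2 ≤ n) :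
    Integrable (fun x => Pp n k (F x)) := by
  have hPpc : Continuous (Pp n k) := by unfold Pp; fun_prop
  have hC : Integrable (fun x => ((n : ℝ) + k) * (F x * (1 - F x))) := hFF.const_mul _
  refine hC.mono (hPpc.measurable.comp hm.measurable).aestronglyMeasurable
    (Filter.Eventually.of_forall fun x => ?_)
  have hb := Pp_abs_le (k := k) hn (h0 x) (h1 x)
  rw [Real.norm_eq_abs, Real.norm_eq_abs]
  have h2 : 0 ≤ ((n : ℝ) + k) * (F x * (1 - F x)) := by
    have h3 := h0 x; have h4 := h1 x
    have hk0 : (0:ℝ) ≤ k := Nat.cast_nonneg k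
    have hn0 : (0:ℝ) ≤ n := Nat.cast_nonneg n
    exact mul_nonneg (by linarith) (mul_nonneg h3 (by linarith))
  rw [abs_of_nonneg h2]
  exact hb

set_option maxHeartbeats 2000000 in
lemma key_nonneg {F : ℝ → ℝ} (hm : Monotone F) (h0 : ∀ x, 0 ≤ F x) (h1 : ∀ x, F x ≤ 1)
    (hb : Tendsto F atBot (𝓝 0))
    (hcv : ConvexOn ℝ {x | F x < 1} (fun x => -Real.log (1 - F x)))
    (hFF : Integrable (fun x => F x * (1 - F x)))
    {n k : ℕ} (hn : 2 ≤ n) (hk : 1 ≤ k) :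
    0 ≤ ∫ x, Pp n k (F x) := by
  classical
  have hFm : Measurable F := hm.measurable
  have hPpc : Continuous (Pp n k) := by unfold Pp; fun_prop
  set f : ℝ → ℝ := fun x => Pp n k (F x) with hfdef
  have hfm : Measurable f := hPpc.measurable.comp hFm
  have hfi : Integrable f := PpF_integrable hm h0 h1 hFF hn
  have hnpos : (0:ℝ) < n := by
    have : (2:ℝ) ≤ n := by exact_mod_cast hn
    linarith
  have hkpos : (0:ℝ) < k := by
    have : (1:ℝ) ≤ k := by exact_mod_cast hk
    linarith
  have hnk : (0:ℝ) < (n:ℝ) + k := by linarith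
  set tstar : ℝ := n / ((n:ℝ) + k) with htsdef
  have hts0 : 0 < tstar := div_pos hnpos hnk
  have hts1 : tstar < 1 := by rw [htsdef, div_lt_one hnk]; linarith
  have htseq : ((n:ℝ) + k) * tstar = n := by rw [htsdef]; field_simp
  -- case split on the transition region having measure zero
  by_cases hW : volume {x | tstar < F x ∧ F x < 1} = 0
  · apply integral_nonneg_of_ae
    have hsub0 : {x : ℝ | ¬ 0 ≤ Pp n k (F x)} ⊆ {x | tstar < F x ∧ F x < 1} := by
      intro x hx
      simp only [Set.mem_setOf_eq, not_le] at hx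
      constructor
      · by_contra hle
        push_neg at hle
        have : 0 ≤ Pp n k (F x) := by
          apply Pp_nonneg (h0 x) (h1 x)
          nlinarith [htseq, h0 x]
        linarith
      · rcases lt_or_eq_of_le (h1 x) with h | h
        · exact h
        · rw [h, Pp_one hk] at hx
          linarith
    have hnull : ∀ᵐ x, 0 ≤ Pp n k (F x) := by
      rw [ae_iff]
      exact measure_mono_null hsub0 hW
    exact hnull
  · -- main case
    obtain ⟨z₁, hz₁, z₂, hz₂, hz12⟩ :
        ∃ z₁, (tstar < F z₁ ∧ F z₁ < 1) ∧ ∃ z₂, (tstar < F z₂ ∧ F z₂ < 1) ∧ z₁ < z₂ := by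
      have hnt : Set.Nontrivial {x | tstar < F x ∧ F x < 1} := by
        by_contra hcon
        rw [Set.not_nontrivial_iff] at hcon
        exact hW (hcon.measure_zero _)
      obtain ⟨a, ha, b', hb', hab⟩ := hnt
      rcases hab.lt_or_gt with h | h
      · exact ⟨a, ha, b', hb', h⟩
      · exact ⟨b', hb', a, ha, h⟩
    set φ : ℝ → ℝ := fun x => ell (F x) with hφdef
    have hsub : Set.Iio z₂ ⊆ {x | F x < 1} := fun x hx => lt_of_le_of_lt (hm (le_of_lt hx)) hz₂.2
    have hcv2 : ConvexOn ℝ (Set.Iio z₂) φ := ConvexOn.subset hcv hsub (convex_Iio _)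
    have hφcont : ContinuousOn φ (Set.Iio z₂) := hcv2.continuousOn isOpen_Iio
    have hFeq' : EqOn F (fun x => 1 - Real.exp (-φ x)) (Set.Iio z₂) := by
      intro x hx
      have h1x : F x < 1 := hsub hx
      simp only [hφdef]
      rw [exp_ell h1x]
      ring
    have hFcont : ContinuousOn F (Set.Iio z₂) := by
      refine ContinuousOn.congr ?_ hFeq'
      exact continuousOn_const.sub
        ((Real.continuous_exp.comp continuous_neg).comp_continuousOn hφcont)
    have hφmono : ∀ a b : ℝ, a ≤ b → F b < 1 → φ a ≤ φ b := fun a b hab hb =>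
      ell_mono (hm hab) hb
    -- slope machinery
    have slope4 : ∀ u v p q : ℝ, u < v → v ≤ p → p < q → F q < 1 →
        (φ v - φ u) / (v - u) ≤ (φ q - φ p) / (q - p) := by
      intro u v p q huv hvp hpq hq
      have hus : F u < 1 := lt_of_le_of_lt (hm (by linarith)) hq
      have hvs : F v < 1 := lt_of_le_of_lt (hm (by linarith)) hq
      have hps : F p < 1 := lt_of_le_of_lt (hm hpq.le) hq
      rcases eq_or_lt_of_le hvp with rfl | hvp'
      · exact hcv.slope_mono_adjacent hus hq huv hpq
      · exact le_trans (hcv.slope_mono_adjacent hus hps huv hvp')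
          (hcv.slope_mono_adjacent hvs hq hvp' hpq)
    set sstar : ℝ := ell tstar with hssdef
    have hss0 : 0 < sstar := by
      rw [hssdef, ← ell_zero]
      exact ell_lt hts0 hts1
    have hφz₁ : sstar < φ z₁ := ell_lt hz₁.1 hz₁.2
    have hφbot : Tendsto φ atBot (𝓝 0) := by
      have h1 : Tendsto (fun x => 1 - F x) atBot (𝓝 1) := by
        have := tendsto_const_nhds (x := (1:ℝ)) (f := atBot).sub hb
        simpa using this
      have h2 := (Real.continuousAt_log one_ne_zero).tendsto.comp h1
      simp only [Function.comp_def, Real.log_one] at h2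
      have h3 := h2.neg
      rw [neg_zero] at h3
      exact h3
    obtain ⟨m₀, hm₀z, hφm₀⟩ : ∃ m₀, m₀ < z₁ ∧ φ m₀ < sstar / 2 := by
      have h1 : ∀ᶠ x in atBot, φ x < sstar / 2 := hφbot.eventually_lt_const (by linarith)
      have h2 : ∀ᶠ x in atBot, x < z₁ := eventually_lt_atBot z₁
      obtain ⟨m₀, h3, h4⟩ := (h2.and h1).exists
      exact ⟨m₀, h3, h4⟩
    have hICC : Set.Icc m₀ z₁ ⊆ Set.Iio z₂ := fun x hx => lt_of_le_of_lt hx.2 hz12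
    have hIVT := intermediate_value_Icc hm₀z.le (hφcont.mono hICC)
    obtain ⟨v₀, hv₀mem, hv₀⟩ : ∃ v₀ ∈ Set.Icc m₀ z₁, φ v₀ = sstar :=
      hIVT ⟨by linarith, hφz₁.le⟩
    obtain ⟨u₀, hu₀mem, hu₀⟩ : ∃ u₀ ∈ Set.Icc m₀ z₁, φ u₀ = sstar / 2 :=
      hIVT ⟨hφm₀.le, by linarith⟩
    have hFv₀ : F v₀ = tstar := by
      have hv₀s : F v₀ < 1 := hsub (hICC hv₀mem)
      have e1 : Real.exp (-φ v₀) = 1 - F v₀ := exp_ell hv₀s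
      rw [hv₀, hssdef, exp_ell hts1] at e1
      linarith
    have hu₀v₀ : u₀ < v₀ := by
      by_contra hcon
      push_neg at hcon
      have := hφmono v₀ u₀ hcon (hsub (hICC hu₀mem))
      rw [hu₀, hv₀] at this
      linarith
    set RS : Set ℝ :=
      {r | ∃ p q : ℝ, p < q ∧ tstar < F p ∧ F q < 1 ∧ r = (φ q - φ p) / (q - p)} with hRSdef
    have hlbRS : ∀ r ∈ RS, (φ v₀ - φ u₀) / (v₀ - u₀) ≤ r := by
      rintro r ⟨p, q, hpq, hFp, hFq, rfl⟩
      have hv₀p : v₀ ≤ p := by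
        by_contra hcon
        push_neg at hcon
        have := hm hcon.le
        rw [hFv₀] at this
        linarith
      exact slope4 u₀ v₀ p q hu₀v₀ hv₀p hpq hFq
    have hRSne : RS.Nonempty := ⟨_, z₁, z₂, hz12, hz₁.1, hz₂.2, rfl⟩
    set c : ℝ := sInf RS with hcdef
    have hbddRS : BddBelow RS := ⟨_, hlbRS⟩
    have hc_pos : 0 < c := by
      have h1 : 0 < (φ v₀ - φ u₀) / (v₀ - u₀) := by
        apply div_pos _ (by linarith)
        rw [hu₀, hv₀]
        linarith
      exact lt_of_lt_of_le h1 (le_csInf hRSne hlbRS)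
    have hc_le : ∀ p q : ℝ, p < q → tstar < F p → F q < 1 → c ≤ (φ q - φ p) / (q - p) :=
      fun p q hpq h2 h3 => csInf_le hbddRS ⟨p, q, hpq, h2, h3, rfl⟩
    have hc_ge : ∀ u v : ℝ, u < v → F v ≤ tstar → (φ v - φ u) / (v - u) ≤ c := by
      intro u v huv hFv
      apply le_csInf hRSne
      rintro r ⟨p, q, hpq, hFp, hFq, rfl⟩
      have hvp : v ≤ p := by
        by_contra hcon
        push_neg at hcon
        have := hm hcon.le
        linarith
      exact slope4 u v p q huv hvp hpq hFq
    -- the exponential comparison function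
    set g : ℝ → ℝ := fun u => (1 - Real.exp (-u)) ^ n * Real.exp (-((k:ℝ) * u)) with hgdef
    set E : ℝ → ℝ := fun u => Pp n k (1 - Real.exp (-u)) with hEdef
    have hEcont : Continuous E := by
      apply hPpc.comp
      fun_prop
    have ht01 : ∀ u : ℝ, 0 < u → 0 < 1 - Real.exp (-u) ∧ 1 - Real.exp (-u) < 1 := by
      intro u hu
      constructor
      · have : Real.exp (-u) < 1 := by
          rw [Real.exp_lt_one_iff]
          linarith
        linarith
      · linarith [Real.exp_pos (-u)]
    have hgderiv : ∀ u : ℝ, HasDerivAt g (E u) u := by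
      intro u
      have h1 : HasDerivAt (fun s : ℝ => 1 - Real.exp (-s)) (Real.exp (-u)) u := by
        have h0' : HasDerivAt (fun s : ℝ => -s) (-1 : ℝ) u := (hasDerivAt_id u).neg
        have h2 := (Real.hasDerivAt_exp (-u)).comp u h0'
        have h3 := (hasDerivAt_const u (1:ℝ)).sub h2
        exact h3.congr_deriv (by ring)
      have h2 : HasDerivAt (fun s : ℝ => (1 - Real.exp (-s)) ^ n)
          ((n : ℝ) * (1 - Real.exp (-u)) ^ (n - 1) * Real.exp (-u)) u := by
        exact h1.pow n
      have h3 : HasDerivAt (fun s : ℝ => Real.exp (-((k:ℝ) * s)))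
          (-(k:ℝ) * Real.exp (-((k:ℝ) * u))) u := by
        have h0' : HasDerivAt (fun s : ℝ => -((k:ℝ) * s)) (-(k:ℝ)) u := by
          exact ((hasDerivAt_id u).const_mul (k:ℝ)).neg.congr_deriv (by ring)
        have h4 := (Real.hasDerivAt_exp (-((k:ℝ)*u))).comp u h0'
        exact h4.congr_deriv (by ring)
      have h4 := h2.mul h3
      refine h4.congr_deriv ?_
      have hkk : Real.exp (-((k:ℝ)*u)) = (Real.exp (-u)) ^ k := by
        rw [← Real.exp_nat_mul]; ring_nf
      have hnn : (1 - Real.exp (-u)) ^ n = (1 - Real.exp (-u)) ^ (n-1) * (1 - Real.exp (-u)) := by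
        conv_lhs => rw [show n = (n-1)+1 by omega]
        rw [pow_succ]
      rw [hEdef]
      simp only
      unfold Pp
      rw [show (1:ℝ) - (1 - Real.exp (-u)) = Real.exp (-u) by ring, hkk, hnn]
      ring
    have hIntE : IntegrableOn E (Set.Ioi sstar) := by
      have hbase : IntegrableOn (fun u : ℝ => Real.exp (-u)) (Set.Ioi sstar) := by
        have := exp_neg_integrableOn_Ioi sstar (zero_lt_one)
        simpa using this
      refine Integrable.mono (hbase.const_mul ((n:ℝ)+k))
        hEcont.aestronglyMeasurable.restrict ?_
      rw [ae_restrict_iff' measurableSet_Ioi]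
      refine Filter.Eventually.of_forall fun u hu => ?_
      have hu0 : 0 < u := hss0.trans hu
      obtain ⟨h1', h2'⟩ := ht01 u hu0
      rw [Real.norm_eq_abs, Real.norm_eq_abs]
      have hb1 := Pp_abs_le (k := k) hn (by linarith : (0:ℝ) ≤ 1 - Real.exp (-u))
        (by linarith : (1:ℝ) - Real.exp (-u) ≤ 1)
      have hEb : |E u| ≤ ((n:ℝ)+k) * Real.exp (-u) := by
        rw [hEdef]
        simp only
        refine le_trans hb1 ?_
        have he : (1 : ℝ) - (1 - Real.exp (-u)) = Real.exp (-u) := by ring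
        rw [he]
        have hin : (1 - Real.exp (-u)) * Real.exp (-u) ≤ Real.exp (-u) := by
          nlinarith [Real.exp_pos (-u)]
        exact mul_le_mul_of_nonneg_left hin hnk.le
      refine le_trans hEb ?_
      rw [abs_of_nonneg (by positivity)]
    have hgs0 : g 0 = 0 := by
      rw [hgdef]
      simp [zero_pow (by omega : n ≠ 0)]
    have hgtop : Tendsto g atTop (𝓝 0) := by
      have h1 : Tendsto (fun u : ℝ => (1 - Real.exp (-u)) ^ n) atTop (𝓝 1) := by
        have h2 : Tendsto (fun u : ℝ => 1 - Real.exp (-u)) atTop (𝓝 1) := by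
          have h3 := (tendsto_const_nhds (x := (1:ℝ)) (f := atTop)).sub
            Real.tendsto_exp_neg_atTop_nhds_zero
          simpa using h3
        have h4 := h2.pow n
        simpa using h4
      have h2 : Tendsto (fun u : ℝ => Real.exp (-((k:ℝ) * u))) atTop (𝓝 0) := by
        have h3 : Tendsto (fun u : ℝ => (k:ℝ) * u) atTop atTop :=
          Tendsto.const_mul_atTop hkpos tendsto_id
        exact Real.tendsto_exp_neg_atTop_nhds_zero.comp h3
      have h5 := h1.mul h2
      simpa using h5
    have hval1 : ∫ u in Set.Ioc 0 sstar, E u = g sstar := by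
      rw [← intervalIntegral.integral_of_le hss0.le,
        intervalIntegral.integral_eq_sub_of_hasDerivAt (fun u _ => hgderiv u)
          (hEcont.intervalIntegrable 0 sstar), hgs0, sub_zero]
    have hval2 : ∫ u in Set.Ioi sstar, -E u = g sstar := by
      have htop' : Tendsto (fun u => -g u) atTop (𝓝 0) := by
        have := hgtop.neg
        rwa [neg_zero] at this
      have h := integral_Ioi_of_hasDerivAt_of_tendsto
        (f := fun u => -g u) (f' := fun u => -E u) (a := sstar)
        ((hgderiv sstar).neg.continuousAt.continuousWithinAt)
        (fun x _ => (hgderiv x).neg) hIntE.neg htop'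
      simpa using h
    have hEpos : ∀ u ∈ Set.Ioc (0:ℝ) sstar, 0 ≤ E u := by
      intro u hu
      obtain ⟨h1', h2'⟩ := ht01 u hu.1
      apply Pp_nonneg (by linarith) (by linarith)
      have hle : 1 - Real.exp (-u) ≤ tstar := by
        have h3 : Real.exp (-sstar) ≤ Real.exp (-u) := Real.exp_le_exp.2 (by linarith [hu.2])
        rw [hssdef, exp_ell hts1] at h3
        linarith
      nlinarith [htseq]
    have hEneg : ∀ u : ℝ, sstar ≤ u → E u ≤ 0 := by
      intro u hu
      obtain ⟨h1', h2'⟩ := ht01 u (hss0.trans_le hu)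
      apply Pp_nonpos (by linarith) (by linarith)
      have hge : tstar ≤ 1 - Real.exp (-u) := by
        have h3 : Real.exp (-u) ≤ Real.exp (-sstar) := Real.exp_le_exp.2 (by linarith)
        rw [hssdef, exp_ell hts1] at h3
        linarith
      nlinarith [htseq]
    -- positive and negative parts
    set fp : ℝ → ℝ := fun x => max (f x) 0 with hfpdef
    set fn : ℝ → ℝ := fun x => max (-f x) 0 with hfndef
    set Ep : ℝ → ℝ := fun u => max (E u) 0 with hEpdef
    set En : ℝ → ℝ := fun u => max (-E u) 0 with hEndef
    have hfpm : Measurable fp := hfm.max measurable_const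
    have hfnm : Measurable fn := hfm.neg.max measurable_const
    have hEpm : Measurable Ep := hEcont.measurable.max measurable_const
    have hEnm : Measurable En := hEcont.measurable.neg.max measurable_const
    have lcf_p : ∫⁻ x, ENNReal.ofReal (fp x) = ∫⁻ y in Set.Ioi (0:ℝ), volume {x | y < fp x} :=
      lintegral_eq_lintegral_meas_lt volume
        (Filter.Eventually.of_forall fun x => le_max_right _ _) hfpm.aemeasurable
    have lcf_n : ∫⁻ x, ENNReal.ofReal (fn x) = ∫⁻ y in Set.Ioi (0:ℝ), volume {x | y < fn x} :=
      lintegral_eq_lintegral_meas_lt volume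
        (Filter.Eventually.of_forall fun x => le_max_right _ _) hfnm.aemeasurable
    have lcE_p : ∫⁻ u in Set.Ioi (0:ℝ), ENNReal.ofReal (Ep u)
        = ∫⁻ y in Set.Ioi (0:ℝ), volume ({u | y < Ep u} ∩ Set.Ioi 0) := by
      rw [lintegral_eq_lintegral_meas_lt (f := Ep) (volume.restrict (Set.Ioi 0))
        (Filter.Eventually.of_forall fun u => le_max_right _ _) hEpm.aemeasurable]
      exact lintegral_congr fun y =>
        Measure.restrict_apply (measurableSet_lt measurable_const hEpm)
    have lcE_n : ∫⁻ u in Set.Ioi (0:ℝ), ENNReal.ofReal (En u)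
        = ∫⁻ y in Set.Ioi (0:ℝ), volume ({u | y < En u} ∩ Set.Ioi 0) := by
      rw [lintegral_eq_lintegral_meas_lt (f := En) (volume.restrict (Set.Ioi 0))
        (Filter.Eventually.of_forall fun u => le_max_right _ _) hEnm.aemeasurable]
      exact lintegral_congr fun y =>
        Measure.restrict_apply (measurableSet_lt measurable_const hEnm)
    have hEval_p : ∫⁻ u in Set.Ioi (0:ℝ), ENNReal.ofReal (Ep u) = ENNReal.ofReal (g sstar) := by
      rw [← Set.Ioc_union_Ioi_eq_Ioi hss0.le,
        lintegral_union measurableSet_Ioi (Set.Ioc_disjoint_Ioi le_rfl)]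
      have e1 : ∫⁻ u in Set.Ioc (0:ℝ) sstar, ENNReal.ofReal (Ep u)
          = ENNReal.ofReal (g sstar) := by
        have hcg : ∀ u ∈ Set.Ioc (0:ℝ) sstar, ENNReal.ofReal (Ep u) = ENNReal.ofReal (E u) :=
          fun u hu => by rw [hEpdef]; simp only; rw [max_eq_left (hEpos u hu)]
        rw [setLIntegral_congr_fun measurableSet_Ioc hcg]
        rw [← ofReal_integral_eq_lintegral_ofReal (hEcont.integrableOn_Ioc)
          ((ae_restrict_iff' measurableSet_Ioc).2 (Filter.Eventually.of_forall hEpos))]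
        rw [hval1]
      have e2 : ∫⁻ u in Set.Ioi sstar, ENNReal.ofReal (Ep u) = 0 := by
        have hz : ∀ u ∈ Set.Ioi sstar, ENNReal.ofReal (Ep u) = 0 := by
          intro u hu
          rw [hEpdef]; simp only
          rw [max_eq_right (hEneg u (le_of_lt hu))]
          exact ENNReal.ofReal_zero
        rw [setLIntegral_congr_fun measurableSet_Ioi hz]
        simp
      rw [e1, e2, add_zero]
    have hEval_n : ∫⁻ u in Set.Ioi (0:ℝ), ENNReal.ofReal (En u) = ENNReal.ofReal (g sstar) := by
      rw [← Set.Ioc_union_Ioi_eq_Ioi hss0.le,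
        lintegral_union measurableSet_Ioi (Set.Ioc_disjoint_Ioi le_rfl)]
      have e1 : ∫⁻ u in Set.Ioc (0:ℝ) sstar, ENNReal.ofReal (En u) = 0 := by
        have hz : ∀ u ∈ Set.Ioc (0:ℝ) sstar, ENNReal.ofReal (En u) = 0 := by
          intro u hu
          rw [hEndef]; simp only
          rw [max_eq_right (by linarith [hEpos u hu] : -E u ≤ 0)]
          exact ENNReal.ofReal_zero
        rw [setLIntegral_congr_fun measurableSet_Ioc hz]
        simp
      have e2 : ∫⁻ u in Set.Ioi sstar, ENNReal.ofReal (En u) = ENNReal.ofReal (g sstar) := by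
        have hcg : ∀ u ∈ Set.Ioi sstar, ENNReal.ofReal (En u) = ENNReal.ofReal (-E u) :=
          fun u hu => by
            rw [hEndef]; simp only
            rw [max_eq_left (by linarith [hEneg u hu.le] : (0:ℝ) ≤ -E u)]
        rw [setLIntegral_congr_fun measurableSet_Ioi hcg]
        rw [← ofReal_integral_eq_lintegral_ofReal (f := fun u => -E u) hIntE.neg
          ((ae_restrict_iff' measurableSet_Ioi).2 (Filter.Eventually.of_forall
            fun u hu => by
              have := hEneg u hu.le
              show (0:ℝ) ≤ -E u
              linarith))]
        rw [hval2]
      rw [e1, e2, zero_add]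
    -- claim 1 : lower bound for the positive part
    have claim1 : ∀ y : ℝ, 0 < y →
        ENNReal.ofReal c⁻¹ * volume ({u | y < Ep u} ∩ Set.Ioi 0) ≤ volume {x | y < fp x} := by
      intro y hy
      have hsetE : {u | y < Ep u} = {u | y < E u} := by
        ext u
        simp only [Set.mem_setOf_eq, hEpdef, lt_max_iff]
        exact ⟨fun h => h.resolve_right (by linarith), Or.inl⟩
      have hsetf : {x | y < fp x} = {x | y < f x} := by
        ext x
        simp only [Set.mem_setOf_eq, hfpdef, lt_max_iff]
        exact ⟨fun h => h.resolve_right (by linarith), Or.inl⟩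
      rw [hsetE, hsetf]
      set U : Set ℝ := {t | 0 < t ∧ t < 1 ∧ y < Pp n k t} with hUdef
      rcases Set.eq_empty_or_nonempty U with hUe | hU
      · have hES : {u | y < E u} ∩ Set.Ioi 0 = ∅ := by
          rw [Set.eq_empty_iff_forall_notMem]
          rintro u ⟨hu1, hu2⟩
          obtain ⟨ht0, ht1⟩ := ht01 u hu2
          have hmem : (1 - Real.exp (-u)) ∈ U := ⟨ht0, ht1, hu1⟩
          rw [hUe] at hmem
          exact hmem
        rw [hES]
        simp
      · have hUsub : ∀ t ∈ U, y / n ≤ t ∧ t ≤ tstar := by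
          rintro t ⟨ht0, ht1, hty⟩
          constructor
          · have hle := Pp_le (k := k) hn ht0.le ht1.le
            rw [div_le_iff₀ hnpos]
            nlinarith
          · by_contra hcon
            push_neg at hcon
            have hfa : (n:ℝ) * (1 - t) - k * t ≤ 0 := by nlinarith [htseq]
            have := Pp_nonpos ht0.le ht1.le hfa
            linarith
        set a : ℝ := sInf U with hadef
        set b : ℝ := sSup U with hbdef
        have hbddb : BddBelow U := ⟨y / n, fun t ht => (hUsub t ht).1⟩
        have hbdda : BddAbove U := ⟨tstar, fun t ht => (hUsub t ht).2⟩
        have ha0 : 0 < a :=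
          lt_of_lt_of_le (div_pos hy hnpos) (le_csInf hU fun t ht => (hUsub t ht).1)
        have hbts : b ≤ tstar := csSup_le hU fun t ht => (hUsub t ht).2
        have hab : a ≤ b := csInf_le_csSup hU hbddb hbdda
        have hb1 : b < 1 := lt_of_le_of_lt hbts hts1
        have ha1 : a < 1 := lt_of_le_of_lt hab hb1
        have hEbound : volume ({u | y < E u} ∩ Set.Ioi 0)
            ≤ ENNReal.ofReal (ell b - ell a) := by
          have hsub2 : {u | y < E u} ∩ Set.Ioi 0 ⊆ Set.Icc (ell a) (ell b) := by
            rintro u ⟨hu1, hu2⟩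
            obtain ⟨ht0, ht1⟩ := ht01 u hu2
            have htU : (1 - Real.exp (-u)) ∈ U := ⟨ht0, ht1, hu1⟩
            have h3 : a ≤ 1 - Real.exp (-u) := csInf_le hbddb htU
            have h4 : 1 - Real.exp (-u) ≤ b := le_csSup hbdda htU
            constructor
            · rw [← ell_exp u]
              exact ell_mono h3 ht1
            · rw [← ell_exp u]
              exact ell_mono h4 hb1
          refine le_trans (measure_mono hsub2) (le_of_eq Real.volume_Icc)
        have hUa_bdd : BddAbove {x | F x ≤ a} := by
          refine ⟨z₁, fun x hx => ?_⟩
          by_contra hcon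
          push_neg at hcon
          have h5 : F z₁ ≤ F x := hm hcon.le
          have h6 : F x ≤ a := hx
          linarith [hz₁.1, hbts, hab]
        have hUa_ne : {x | F x ≤ a}.Nonempty := by
          obtain ⟨w, hw⟩ := (hb.eventually_lt_const ha0).exists
          exact ⟨w, hw.le⟩
        set u := sSup {x | F x ≤ a} with hudef
        have hVb_ne : {x | b ≤ F x}.Nonempty :=
          ⟨z₁, by simp only [Set.mem_setOf_eq]; linarith [hz₁.1]⟩
        have hVb_bdd : BddBelow {x | b ≤ F x} := by
          obtain ⟨w, hw⟩ := (hb.eventually_lt_const ha0).exists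
          refine ⟨w, fun x hx => ?_⟩
          by_contra hcon
          push_neg at hcon
          have h5 : F x ≤ F w := hm hcon.le
          have h6 : b ≤ F x := hx
          linarith
        set v := sInf {x | b ≤ F x} with hvdef
        have hu_le : u ≤ z₁ := by
          refine csSup_le hUa_ne fun x hx => ?_
          by_contra hcon
          push_neg at hcon
          have h5 : F z₁ ≤ F x := hm hcon.le
          have h6 : F x ≤ a := hx
          linarith [hz₁.1, hbts, hab]
        have hv_le : v ≤ z₁ :=
          csInf_le hVb_bdd (by simp only [Set.mem_setOf_eq]; linarith [hz₁.1])
        have hgt_u : ∀ x, u < x → a < F x := by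
          intro x hx
          by_contra hcon
          push_neg at hcon
          exact absurd (le_csSup hUa_bdd hcon) (not_le.2 hx)
        have hlt_u : ∀ x, x < u → F x ≤ a := by
          intro x hx
          obtain ⟨w, hw, hxw⟩ := exists_lt_of_lt_csSup hUa_ne hx
          exact le_trans (hm hxw.le) hw
        have hlt_v : ∀ x, x < v → F x < b := by
          intro x hx
          by_contra hcon
          push_neg at hcon
          exact absurd (csInf_le hVb_bdd hcon) (not_le.2 hx)
        have hgt_v : ∀ x, v < x → b ≤ F x := by
          intro x hx
          obtain ⟨w, hw, hwx⟩ := exists_lt_of_csInf_lt hVb_ne hx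
          exact le_trans hw (hm hwx.le)
        have hcu : ContinuousAt F u :=
          hFcont.continuousAt (Iio_mem_nhds (lt_of_le_of_lt hu_le hz12))
        have hcv' : ContinuousAt F v :=
          hFcont.continuousAt (Iio_mem_nhds (lt_of_le_of_lt hv_le hz12))
        have hFu : F u = a := by
          have hle : F u ≤ a :=
            le_of_tendsto (hcu.tendsto.mono_left nhdsWithin_le_nhds)
              (eventually_nhdsWithin_of_forall fun x (hx : x ∈ Set.Iio u) => hlt_u x hx)
          have hge : a ≤ F u :=
            ge_of_tendsto (hcu.tendsto.mono_left nhdsWithin_le_nhds)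
              (eventually_nhdsWithin_of_forall fun x (hx : x ∈ Set.Ioi u) => (hgt_u x hx).le)
          linarith
        have hFv : F v = b := by
          have hle : F v ≤ b :=
            le_of_tendsto (hcv'.tendsto.mono_left nhdsWithin_le_nhds)
              (eventually_nhdsWithin_of_forall fun x (hx : x ∈ Set.Iio v) => (hlt_v x hx).le)
          have hge : b ≤ F v :=
            ge_of_tendsto (hcv'.tendsto.mono_left nhdsWithin_le_nhds)
              (eventually_nhdsWithin_of_forall fun x (hx : x ∈ Set.Ioi v) => hgt_v x hx)
          linarith
        rcases le_or_gt v u with hvu | huv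
        · have hba : a = b := le_antisymm hab (by rw [← hFu, ← hFv]; exact hm hvu)
          calc ENNReal.ofReal c⁻¹ * volume ({u' | y < E u'} ∩ Set.Ioi 0)
              ≤ ENNReal.ofReal c⁻¹ * ENNReal.ofReal (ell b - ell a) :=
                mul_le_mul_right hEbound _
            _ = 0 := by rw [hba, sub_self, ENNReal.ofReal_zero, mul_zero]
            _ ≤ volume {x | y < f x} := zero_le
        · have hIoo : Set.Ioo u v ⊆ {x | y < f x} := by
            intro x hx
            have hax : a < F x := hgt_u x hx.1
            have hxb : F x < b := hlt_v x hx.2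
            obtain ⟨t₁, ht₁U, ht₁x⟩ := exists_lt_of_csInf_lt hU hax
            obtain ⟨t₂, ht₂U, ht₂x⟩ := exists_lt_of_lt_csSup hU hxb
            exact U_conv hy ht₁U ht₂U ht₁x ht₂x
          have hslope : ell b - ell a ≤ c * (v - u) := by
            have h1' : (φ v - φ u) / (v - u) ≤ c := hc_ge u v huv (by rw [hFv]; exact hbts)
            rw [div_le_iff₀ (by linarith)] at h1'
            have h2' : φ u = ell a := by rw [hφdef]; simp only; rw [hFu]
            have h3' : φ v = ell b := by rw [hφdef]; simp only; rw [hFv]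
            rw [h2', h3'] at h1'
            linarith
          calc ENNReal.ofReal c⁻¹ * volume ({u' | y < E u'} ∩ Set.Ioi 0)
              ≤ ENNReal.ofReal c⁻¹ * ENNReal.ofReal (ell b - ell a) :=
                mul_le_mul_right hEbound _
            _ ≤ ENNReal.ofReal c⁻¹ * ENNReal.ofReal (c * (v - u)) :=
                mul_le_mul_right (ENNReal.ofReal_le_ofReal hslope) _
            _ = ENNReal.ofReal (c⁻¹ * (c * (v - u))) :=
                (ENNReal.ofReal_mul (inv_nonneg.2 hc_pos.le)).symm
            _ = ENNReal.ofReal (v - u) := by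
                rw [← mul_assoc, inv_mul_cancel₀ hc_pos.ne', one_mul]
            _ = volume (Set.Ioo u v) := Real.volume_Ioo.symm
            _ ≤ volume {x | y < f x} := measure_mono hIoo
    -- claim 2 : upper bound for the negative part
    have claim2 : ∀ y : ℝ, 0 < y →
        volume {x | y < fn x} ≤ ENNReal.ofReal c⁻¹ * volume ({u | y < En u} ∩ Set.Ioi 0) := by
      intro y hy
      have hsetE : {u | y < En u} = {u | y < -E u} := by
        ext u
        simp only [Set.mem_setOf_eq, hEndef, lt_max_iff]
        exact ⟨fun h => h.resolve_right (by linarith), Or.inl⟩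
      have hsetf : {x | y < fn x} = {x | y < -f x} := by
        ext x
        simp only [Set.mem_setOf_eq, hfndef, lt_max_iff]
        exact ⟨fun h => h.resolve_right (by linarith), Or.inl⟩
      rw [hsetE, hsetf]
      set V : Set ℝ := {t | 0 < t ∧ t < 1 ∧ y < -Pp n k t} with hVdef
      have hVfacts : ∀ t ∈ V, tstar < t ∧ t ≤ 1 - y / ((n:ℝ) + k) := by
        rintro t ⟨ht0, ht1, hty⟩
        constructor
        · by_contra hcon
          push_neg at hcon
          have := Pp_nonneg (n := n) (k := k) ht0.le ht1.le
            (by nlinarith [htseq, mul_le_mul_of_nonneg_left hcon hnk.le])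
          linarith
        · have hle := neg_Pp_le (k := k) hn ht0.le ht1.le
          have h5 : y / ((n:ℝ) + k) ≤ 1 - t := by
            rw [div_le_iff₀ hnk]
            nlinarith
          linarith
      have hmemV : ∀ x : ℝ, y < -f x → F x ∈ V := by
        intro x hx
        have hx' : y < -Pp n k (F x) := hx
        have hFx1 : F x < 1 := by
          rcases lt_or_eq_of_le (h1 x) with h | h
          · exact h
          · rw [h, Pp_one hk] at hx'
            linarith
        have hFx0 : 0 < F x := by
          rcases (h0 x).lt_or_eq with h | h
          · exact h
          · rw [← h, Pp_zero hn] at hx'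
            linarith
        exact ⟨hFx0, hFx1, hx'⟩
      rcases Set.eq_empty_or_nonempty V with hVe | hV
      · have hfe : {x | y < -f x} = ∅ := by
          rw [Set.eq_empty_iff_forall_notMem]
          intro x hx
          have hmem := hmemV x hx
          rw [hVe] at hmem
          exact hmem
        rw [hfe]
        simp
      · set aV : ℝ := sInf V with haVdef
        set bV : ℝ := sSup V with hbVdef
        have hbddbV : BddBelow V := ⟨tstar, fun t ht => (hVfacts t ht).1.le⟩
        have hbddaV : BddAbove V := ⟨1 - y / ((n:ℝ) + k), fun t ht => (hVfacts t ht).2⟩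
        have haVts : tstar ≤ aV := le_csInf hV fun t ht => (hVfacts t ht).1.le
        have hbVle : bV ≤ 1 - y / ((n:ℝ) + k) := csSup_le hV fun t ht => (hVfacts t ht).2
        have hbV1 : bV < 1 := by
          have h5 : 0 < y / ((n:ℝ) + k) := div_pos hy hnk
          linarith
        have haVbV : aV ≤ bV := csInf_le_csSup hV hbddbV hbddaV
        have haV1 : aV < 1 := lt_of_le_of_lt haVbV hbV1
        have hsaV : sstar ≤ ell aV := by
          rw [hssdef]
          exact ell_mono haVts haV1
        have hDnn : 0 ≤ ell bV - ell aV := by linarith [ell_mono haVbV hbV1]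
        have hdiam : volume {x | y < -f x} ≤ ENNReal.ofReal ((ell bV - ell aV) / c) := by
          refine le_trans (Real.volume_le_diam _) (EMetric.diam_le fun x hx x' hx' => ?_)
          rw [edist_dist, Real.dist_eq]
          apply ENNReal.ofReal_le_ofReal
          have key : ∀ p q : ℝ, y < -f p → y < -f q → p < q →
              q - p ≤ (ell bV - ell aV) / c := by
            intro p q hp hq hpq
            have hFp := hmemV p hp
            have hFq := hmemV q hq
            have h1' := hc_le p q hpq (hVfacts _ hFp).1 hFq.2.1
            rw [le_div_iff₀ (by linarith : (0:ℝ) < q - p)] at h1'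
            have h2' : φ q - φ p ≤ ell bV - ell aV := by
              have e1 : ell aV ≤ φ p := ell_mono (csInf_le hbddbV hFp) hFp.2.1
              have e2 : φ q ≤ ell bV := ell_mono (le_csSup hbddaV hFq) hbV1
              linarith
            rw [le_div_iff₀ hc_pos]
            nlinarith
          rcases lt_trichotomy x x' with h | h | h
          · rw [abs_of_nonpos (by linarith)]
            have := key x x' hx hx' h
            linarith
          · rw [h, sub_self, abs_zero]
            positivity
          · rw [abs_of_nonneg (by linarith)]
            exact key x' x hx' hx h
        have hEvol : ENNReal.ofReal (ell bV - ell aV)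
            ≤ volume ({u | y < -E u} ∩ Set.Ioi 0) := by
          rw [← Real.volume_Ioo (a := ell aV) (b := ell bV)]
          apply measure_mono
          rintro w ⟨hw1, hw2⟩
          have hw0 : 0 < w := lt_of_lt_of_le hss0 (le_trans hsaV hw1.le)
          obtain ⟨hw01, hw02⟩ := ht01 w hw0
          have ht1' : aV < 1 - Real.exp (-w) := by
            have h3 : Real.exp (-w) < Real.exp (-ell aV) := Real.exp_lt_exp.2 (by linarith)
            rw [exp_ell haV1] at h3
            linarith
          have ht2' : 1 - Real.exp (-w) < bV := by
            have h3 : Real.exp (-ell bV) < Real.exp (-w) := Real.exp_lt_exp.2 (by linarith)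
            rw [exp_ell hbV1] at h3
            linarith
          obtain ⟨t₁, ht₁V, ht₁⟩ := exists_lt_of_csInf_lt hV ht1'
          obtain ⟨t₂, ht₂V, ht₂⟩ := exists_lt_of_lt_csSup hV ht2'
          exact ⟨V_conv hy ht₁V ht₂V ht₁ ht₂, hw0⟩
        calc volume {x | y < -f x} ≤ ENNReal.ofReal ((ell bV - ell aV) / c) := hdiam
          _ = ENNReal.ofReal c⁻¹ * ENNReal.ofReal (ell bV - ell aV) := by
              rw [← ENNReal.ofReal_mul (inv_nonneg.2 hc_pos.le)]
              congr 1
              ring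
          _ ≤ ENNReal.ofReal c⁻¹ * volume ({u | y < -E u} ∩ Set.Ioi 0) :=
              mul_le_mul_right hEvol _
    -- combine everything
    have hchain : ∫⁻ x, ENNReal.ofReal (fn x) ≤ ∫⁻ x, ENNReal.ofReal (fp x) := by
      calc ∫⁻ x, ENNReal.ofReal (fn x)
          = ∫⁻ y in Set.Ioi (0:ℝ), volume {x | y < fn x} := lcf_n
        _ ≤ ∫⁻ y in Set.Ioi (0:ℝ),
              ENNReal.ofReal c⁻¹ * volume ({u | y < En u} ∩ Set.Ioi 0) :=
            lintegral_mono_ae ((ae_restrict_iff' measurableSet_Ioi).2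
              (Filter.Eventually.of_forall fun y hy => claim2 y hy))
        _ = ENNReal.ofReal c⁻¹
              * ∫⁻ y in Set.Ioi (0:ℝ), volume ({u | y < En u} ∩ Set.Ioi 0) :=
            lintegral_const_mul' _ _ ENNReal.ofReal_ne_top
        _ = ENNReal.ofReal c⁻¹ * ∫⁻ u in Set.Ioi (0:ℝ), ENNReal.ofReal (En u) := by
            rw [← lcE_n]
        _ = ENNReal.ofReal c⁻¹ * ENNReal.ofReal (g sstar) := by rw [hEval_n]
        _ = ENNReal.ofReal c⁻¹ * ∫⁻ u in Set.Ioi (0:ℝ), ENNReal.ofReal (Ep u) := by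
            rw [hEval_p]
        _ = ∫⁻ y in Set.Ioi (0:ℝ),
              ENNReal.ofReal c⁻¹ * volume ({u | y < Ep u} ∩ Set.Ioi 0) := by
            rw [lcE_p, ← lintegral_const_mul' _ _ ENNReal.ofReal_ne_top]
        _ ≤ ∫⁻ y in Set.Ioi (0:ℝ), volume {x | y < fp x} :=
            lintegral_mono_ae ((ae_restrict_iff' measurableSet_Ioi).2
              (Filter.Eventually.of_forall fun y hy => claim1 y hy))
        _ = ∫⁻ x, ENNReal.ofReal (fp x) := lcf_p.symm
    have hfpi : Integrable fp := hfi.pos_part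
    have hfni : Integrable fn := hfi.neg.pos_part
    have hint_p : ∫ x, fp x = (∫⁻ x, ENNReal.ofReal (fp x)).toReal :=
      integral_eq_lintegral_of_nonneg_ae
        (Filter.Eventually.of_forall fun x => le_max_right _ _) hfpm.aestronglyMeasurable
    have hint_n : ∫ x, fn x = (∫⁻ x, ENNReal.ofReal (fn x)).toReal :=
      integral_eq_lintegral_of_nonneg_ae
        (Filter.Eventually.of_forall fun x => le_max_right _ _) hfnm.aestronglyMeasurable
    have hle2 : ∫ x, fn x ≤ ∫ x, fp x := by
      rw [hint_p, hint_n]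
      exact ENNReal.toReal_mono hfpi.lintegral_lt_top.ne hchain
    have hrepr := integral_eq_integral_pos_part_sub_integral_neg_part hfi
    have hfp_eq : ∫ x, ((Real.toNNReal (f x) : ℝ)) = ∫ x, fp x :=
      integral_congr_ae (Filter.Eventually.of_forall fun x => Real.coe_toNNReal' _)
    have hfn_eq : ∫ x, ((Real.toNNReal (-f x) : ℝ)) = ∫ x, fn x :=
      integral_congr_ae (Filter.Eventually.of_forall fun x => Real.coe_toNNReal' _)
    have hfin : ∫ x, f x = (∫ x, fp x) - ∫ x, fn x := by
      rw [hrepr, hfp_eq, hfn_eq]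
    rw [hfin]
    linarith [hle2]

lemma stepA {F : ℝ → ℝ} (hm : Monotone F) (h0 : ∀ x, 0 ≤ F x) (h1 : ∀ x, F x ≤ 1)
    (hFF : Integrable (fun x => F x * (1 - F x)))
    (R : ℕ → ℝ) (hR : ∀ n, R n = (n : ℝ) * ∫ x : ℝ, F x ^ (n - 1) * (1 - F x)) :
    ∀ k n : ℕ, 2 ≤ n → (-1 : ℝ) ^ k * (fwdDiff 1)^[k] R n = ∫ x, Pp n k (F x) := by
  intro k
  induction k with
  | zero =>
    intro n hn
    simp only [pow_zero, one_mul, Function.iterate_zero, id_eq]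
    rw [hR n, ← integral_const_mul]
    refine integral_congr_ae (Filter.Eventually.of_forall fun x => ?_)
    unfold Pp
    push_cast
    ring
  | succ k ih =>
    intro n hn
    have e1 := ih n hn
    have e2 := ih (n + 1) (by omega)
    have hI1 := PpF_integrable hm h0 h1 hFF (n := n) (k := k) hn
    have hI2 := PpF_integrable hm h0 h1 hFF (n := n + 1) (k := k) (by omega)
    have hiter : (fwdDiff 1)^[k + 1] R n = (fwdDiff 1)^[k] R (n + 1) - (fwdDiff 1)^[k] R n := by
      rw [Function.iterate_succ_apply']
      rfl
    have hstep : (-1 : ℝ) ^ (k + 1) * (fwdDiff 1)^[k + 1] R n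
        = (-1 : ℝ) ^ k * (fwdDiff 1)^[k] R n - (-1 : ℝ) ^ k * (fwdDiff 1)^[k] R (n + 1) := by
      rw [hiter]; ring
    rw [hstep, e1, e2, ← integral_sub hI1 hI2]
    exact integral_congr_ae (Filter.Eventually.of_forall fun x => Pp_sub (by omega) k (F x))

end RseqAux

/-- If the cumulative hazard `φ = −log(1−F)` of an integrable nondegenerate
distribution is convex, then the sequence `(R_n)_{n≥2}` is completely monotone:
`(−1)^k (Δ^k R)_n ≥ 0` for all `k ≥ 0`, `n ≥ 2`, where `Δ` is the forward difference. -/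
theorem Rseq_completelyMonotone_of_convex_cumHazard
    (μ : Measure ℝ) [IsProbabilityMeasure μ] (hint : Integrable (fun x => x) μ)
    (F : ℝ → ℝ) (hF : ∀ x, F x = (μ (Set.Iic x)).toReal)
    (hnd : ∃ x, 0 < F x ∧ F x < 1)
    (hconv : ERealConvexOnUniv (cumHazard F))
    (R : ℕ → ℝ) (hR : ∀ n, R n = (n : ℝ) * ∫ x : ℝ, F x ^ (n - 1) * (1 - F x)) :
    ∀ k n : ℕ, 2 ≤ n → 0 ≤ (-1 : ℝ) ^ k * (fwdDiff 1)^[k] R n := by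
  have hFeq : F = fun x => ProbabilityTheory.cdf μ x := by
    funext x; rw [hF x, ProbabilityTheory.cdf_eq_real, measureReal_def]
  have hm : Monotone F := by rw [hFeq]; exact fun a b h => ProbabilityTheory.monotone_cdf μ h
  have h0 : ∀ x, 0 ≤ F x := by rw [hFeq]; exact fun x => ProbabilityTheory.cdf_nonneg μ x
  have h1 : ∀ x, F x ≤ 1 := by rw [hFeq]; exact fun x => ProbabilityTheory.cdf_le_one μ x
  have hb : Filter.Tendsto F Filter.atBot (nhds 0) := by
    rw [hFeq]; exact ProbabilityTheory.tendsto_cdf_atBot μ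
  have hFF : Integrable (fun x => F x * (1 - F x)) :=
    RseqAux.cdf_mul_integrable μ hint hF
  have hcv := RseqAux.phir_convexOn hm hconv
  intro k n hn
  rw [RseqAux.stepA hm h0 h1 hFF R hR k n hn]
  rcases Nat.eq_zero_or_pos k with rfl | hk
  · apply integral_nonneg
    intro x
    apply RseqAux.Pp_nonneg (h0 x) (h1 x)
    have := h1 x
    have := h0 x
    push_cast
    nlinarith
  · exact RseqAux.key_nonneg hm h0 h1 hb hcv hFF hn hk
end

section
/- Let ν₂ be a positive locally finite measure on [0,∞) with finite Laplace transform R(u) = ∫ e^{−ut} dν₂(t) for u ≥ 2. If R is constant on [2, ∞), then ν₂ is concentrated at the single point 0 (i.e., ν₂ is a point mass c·δ₀ with c = R(2)). -/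
open MeasureTheory

/-- If the Laplace transform `R(u) = ∫ e^{−ut} dν₂(t)` of a positive locally finite
measure `ν₂` on `[0,∞)` is finite and constant on `[2,∞)`, then `ν₂` is a point
mass `c·δ₀` at `0` with `c = R(2)`. -/
theorem laplace_constant_implies_dirac
    (ν : Measure ℝ) [IsLocallyFiniteMeasure ν] (hsupp : ν (Set.Iio 0) = 0)
    (hfin : ∀ u : ℝ, 2 ≤ u → Integrable (fun t => Real.exp (-u * t)) ν)
    (hconst : ∀ u : ℝ, 2 ≤ u →
        ∫ t, Real.exp (-u * t) ∂ν = ∫ t, Real.exp (-2 * t) ∂ν) :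
    ν = ENNReal.ofReal (∫ t, Real.exp (-2 * t) ∂ν) • Measure.dirac 0 := by
  have hae0 : ∀ᵐ t ∂ν, 0 ≤ t := by
    rw [ae_iff]
    simp only [not_le]; exact hsupp
  have hle : (fun t => Real.exp (-3 * t)) ≤ᵐ[ν] fun t => Real.exp (-2 * t) := by
    filter_upwards [hae0] with t ht
    exact Real.exp_le_exp.mpr (by nlinarith)
  have heq := (integral_eq_iff_of_ae_le (hfin 3 (by norm_num)) (hfin 2 le_rfl) hle).mp
    (hconst 3 (by norm_num))
  have hzero : ∀ᵐ t ∂ν, t = 0 := by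
    filter_upwards [heq, hae0] with t ht ht0
    have := Real.exp_injective ht
    linarith
  have hcompl : ν ({0} : Set ℝ)ᶜ = 0 := by
    rw [ae_iff] at hzero
    simpa [Set.compl_def] using hzero
  have hfin0 : ν {0} ≠ ⊤ := (isCompact_singleton.measure_lt_top).ne
  have huniv : ν Set.univ = ν {0} := by
    have := measure_union_add_inter (μ := ν) {0} (MeasurableSet.compl (measurableSet_singleton 0))
    rw [← measure_inter_add_diff Set.univ (measurableSet_singleton 0)]
    simp [Set.diff_eq, hcompl]
  have hI : ∫ t, Real.exp (-2 * t) ∂ν = (ν {0}).toReal := by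
    have h1 : (fun t => Real.exp (-2 * t)) =ᵐ[ν] fun _ => (1 : ℝ) := by
      filter_upwards [hzero] with t ht; simp [ht]
    rw [integral_congr_ae h1, integral_const, measureReal_def, huniv]
    simp
  have hofReal : ENNReal.ofReal (∫ t, Real.exp (-2 * t) ∂ν) = ν {0} := by
    rw [hI, ENNReal.ofReal_toReal hfin0]
  rw [hofReal]
  ext s hs
  rw [← measure_inter_add_diff s (measurableSet_singleton 0)]
  have hdiff : ν (s \ {0}) = 0 :=
    measure_mono_null (Set.diff_subset_compl s {0}) hcompl
  rw [hdiff, add_zero, Measure.smul_apply, Measure.dirac_apply' _ hs, smul_eq_mul]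
  by_cases h0 : (0 : ℝ) ∈ s
  · rw [Set.inter_eq_right.mpr (by simpa using h0)]
    simp [Set.indicator_of_mem h0]
  · rw [Set.inter_singleton_eq_empty.mpr h0]
    simp [Set.indicator_of_notMem h0]
end
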